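/- arXiv:1507.05998 — 6 statements merged into one kernel-verified Lean document; each statement's English description precedes it below -/
import Mathlib

section
/- Let P be the transition matrix of a Markov chain on a finite state space S, let t ∈ S be a target state, and for each k ≥ 0 let q_t^k and r_t^k be vectors on S. Initialize q_t^k = 0 for all k, r_t^0 = e_t (the indicator of t), and r_t^k = 0 for k ≥ 1. A REVERSE-PUSH(v,i) operation replaces q_t^i by q_t^i + r_t^i[v]·e_v, replaces r_t^i by r_t^i − r_t^i[v]·e_v, and replaces r_t^{i+1} by r_t^{i+1} + r_t^i[v]·(e_v P^T). Then after any finite sequence of REVERSE-PUSH operations, for every probability distribution σ on S and every ℓ ≥ 0, the invariant ⟨σ P^ℓ, e_t⟩ = ⟨σ, q_t^ℓ⟩ + Σ_{k=0}^{ℓ} ⟨σ P^k, r_t^{ℓ−k}⟩ holds. -/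
open Matrix Finset

/-- The REVERSE-PUSH(v,i) operation on a pair (estimate vectors, residual vectors). -/
noncomputable def reversePush {S : Type*} [Fintype S] [DecidableEq S] (P : Matrix S S ℝ)
    (v : S) (i : ℕ) (qr : (ℕ → S → ℝ) × (ℕ → S → ℝ)) : (ℕ → S → ℝ) × (ℕ → S → ℝ) :=
  let q := qr.1
  let r := qr.2
  (Function.update q i (fun u => q i u + r i v * (if u = v then 1 else 0)),
   Function.update
     (Function.update r i (fun u => r i u - r i v * (if u = v then 1 else 0)))
     (i + 1) (fun u => r (i + 1) u + r i v * P u v))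

/-- Initial estimate and residual vectors: q^k = 0, r^0 = e_t, r^k = 0 for k ≥ 1. -/
noncomputable def initQR {S : Type*} [Fintype S] [DecidableEq S] (t : S) :
    (ℕ → S → ℝ) × (ℕ → S → ℝ) :=
  (fun _ _ => 0, fun k u => if k = 0 ∧ u = t then 1 else 0)

/-- State of the vectors after a finite sequence of REVERSE-PUSH operations. -/
noncomputable def pushSeq {S : Type*} [Fintype S] [DecidableEq S] (P : Matrix S S ℝ) (t : S) :
    List (S × ℕ) → (ℕ → S → ℝ) × (ℕ → S → ℝ)
  | [] => initQR t
  | op :: ops => reversePush P op.1 op.2 (pushSeq P t ops)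

lemma step_inv {S : Type*} [Fintype S] [DecidableEq S]
    (P : Matrix S S ℝ) (t v : S) (i : ℕ) (σ : S → ℝ) (q r : ℕ → S → ℝ)
    (ih : ∀ ℓ, (σ ᵥ* P ^ ℓ) t = (∑ u, σ u * q ℓ u) +
      ∑ k ∈ Finset.range (ℓ + 1), ∑ u, (σ ᵥ* P ^ k) u * r (ℓ - k) u)
    (ℓ : ℕ) :
    (σ ᵥ* P ^ ℓ) t =
      (∑ u, σ u * (reversePush P v i (q, r)).1 ℓ u) +
        ∑ k ∈ Finset.range (ℓ + 1), ∑ u, (σ ᵥ* P ^ k) u * (reversePush P v i (q, r)).2 (ℓ - k) u := by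
  set A := r i v with hA
  have hq : ∀ j u, (reversePush P v i (q, r)).1 j u
      = q j u + (if j = i then A * (if u = v then 1 else 0) else 0) := by
    intro j u
    by_cases h : j = i <;> simp [reversePush, Function.update_apply, h, hA]
  have hr : ∀ j u, (reversePush P v i (q, r)).2 j u
      = r j u + (if j = i + 1 then A * P u v else if j = i then -(A * (if u = v then 1 else 0)) else 0) := by
    intro j u
    by_cases h1 : j = i + 1
    · simp [reversePush, Function.update_apply, h1, hA]
    · by_cases h2 : j = i <;> simp [reversePush, Function.update_apply, h1, h2, hA] <;> ring
  have key : (if ℓ = i then A * σ v else 0)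
      + (∑ k ∈ Finset.range (ℓ + 1),
          (if ℓ - k = i + 1 then A * (σ ᵥ* P ^ (k+1)) v
           else if ℓ - k = i then -(A * (σ ᵥ* P ^ k) v) else 0)) = 0 := by
    rcases lt_trichotomy ℓ i with h | h | h
    · have : ∀ k ∈ Finset.range (ℓ + 1),
          (if ℓ - k = i + 1 then A * (σ ᵥ* P ^ (k+1)) v
           else if ℓ - k = i then -(A * (σ ᵥ* P ^ k) v) else 0) = 0 := by
        intro k hk
        have h1 : ℓ - k ≠ i + 1 := by omega
        have h2 : ℓ - k ≠ i := by omega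
        simp [h1, h2]
      rw [Finset.sum_congr rfl this]
      simp [Nat.ne_of_lt h]
    · subst h
      rw [Finset.sum_eq_single 0]
      · simp [pow_zero, Matrix.vecMul_one]
      · intro k hk hk0
        have h1 : ℓ - k ≠ ℓ + 1 := by omega
        have h2 : ℓ - k ≠ ℓ := by simp at hk; omega
        simp [h1, h2]
      · simp
    · have hne : ℓ ≠ i := by omega
      have hsub : ({ℓ - i - 1, ℓ - i} : Finset ℕ) ⊆ Finset.range (ℓ + 1) := by
        intro x hx
        simp at hx
        simp
        omega
      rw [← Finset.sum_subset hsub]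
      · rw [Finset.sum_pair (by omega : ℓ - i - 1 ≠ ℓ - i)]
        have e1 : ℓ - (ℓ - i - 1) = i + 1 := by omega
        have e2 : ℓ - (ℓ - i) = i := by omega
        have e3 : ℓ - i - 1 + 1 = ℓ - i := by omega
        simp [e1, e2, e3, hne]
      · intro x hx hx'
        simp at hx hx'
        have h1 : ℓ - x ≠ i + 1 := by omega
        have h2 : ℓ - x ≠ i := by omega
        simp [h1, h2]
  calc (σ ᵥ* P ^ ℓ) t
      = ((∑ u, σ u * q ℓ u) + (if ℓ = i then A * σ v else 0))
        + ((∑ k ∈ Finset.range (ℓ + 1), ∑ u, (σ ᵥ* P ^ k) u * r (ℓ - k) u)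
          + (∑ k ∈ Finset.range (ℓ + 1),
              (if ℓ - k = i + 1 then A * (σ ᵥ* P ^ (k+1)) v
               else if ℓ - k = i then -(A * (σ ᵥ* P ^ k) v) else 0))) := by
        rw [ih ℓ]; linarith [key]
    _ = _ := by
        congr 1
        · simp only [hq, mul_add, Finset.sum_add_distrib]
          congr 1
          by_cases h : ℓ = i
          · simp [h, mul_ite, mul_one, mul_zero, Finset.sum_ite_eq', mul_comm]
          · simp [h]
        · rw [← Finset.sum_add_distrib]
          refine Finset.sum_congr rfl fun k hk => ?_
          simp only [hr, mul_add, Finset.sum_add_distrib]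
          congr 1
          by_cases h1 : ℓ - k = i + 1
          · have : (σ ᵥ* P ^ (k+1)) v = ∑ u, (σ ᵥ* P ^ k) u * P u v := by
              rw [pow_succ, ← Matrix.vecMul_vecMul]
              simp [Matrix.vecMul, dotProduct, mul_comm]
            simp only [h1, if_true, this, Finset.mul_sum, reduceIte]
            exact Finset.sum_congr rfl fun x _ => by ring
          · by_cases h2 : ℓ - k = i
            · rw [if_neg h1, if_pos h2]
              have hpt : ∀ x : S, (σ ᵥ* P ^ k) x *
                  (if ℓ - k = i + 1 then A * P x v
                   else if ℓ - k = i then -(A * (if x = v then 1 else 0)) else 0)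
                  = -(if x = v then A * (σ ᵥ* P ^ k) x else 0) := by
                intro x
                rw [if_neg h1, if_pos h2]
                by_cases hx : x = v <;> simp [hx] <;> ring
              rw [Finset.sum_congr rfl fun x _ => hpt x, Finset.sum_neg_distrib,
                Finset.sum_ite_eq' Finset.univ v (fun x => A * (σ ᵥ* P ^ k) x)]
              simp
            · simp [h1, h2]


/-- After any finite sequence of REVERSE-PUSH operations, the invariant
    ⟨σP^ℓ, e_t⟩ = ⟨σ, q_t^ℓ⟩ + Σ_{k=0}^{ℓ} ⟨σP^k, r_t^{ℓ-k}⟩ holds. -/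
theorem reverse_push_invariant {S : Type*} [Fintype S] [DecidableEq S]
    (P : Matrix S S ℝ) (hPnonneg : ∀ u v, 0 ≤ P u v) (hProw : ∀ u, ∑ v, P u v = 1)
    (t : S) (ops : List (S × ℕ))
    (σ : S → ℝ) (hσnonneg : ∀ u, 0 ≤ σ u) (hσsum : ∑ u, σ u = 1) (ℓ : ℕ) :
    (σ ᵥ* P ^ ℓ) t =
      (∑ u, σ u * (pushSeq P t ops).1 ℓ u) +
        ∑ k ∈ Finset.range (ℓ + 1), ∑ u, (σ ᵥ* P ^ k) u * (pushSeq P t ops).2 (ℓ - k) u := by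
  induction ops generalizing ℓ with
  | nil =>
    simp only [pushSeq, initQR, mul_zero, Finset.sum_const_zero, zero_add]
    rw [Finset.sum_eq_single ℓ]
    · simp
    · intro k hk hne
      have h0 : ℓ - k ≠ 0 := by simp at hk; omega
      simp [h0]
    · simp
  | cons op ops ihops =>
    exact step_inv P t op.1 op.2 σ (pushSeq P t ops).1 (pushSeq P t ops).2
      (fun m => ihops m) ℓ
end

section
/- Let P be the transition matrix of a Markov chain on finite state space S with target t, and suppose vectors {q_t^k, r_t^k} satisfy the invariant ⟨σ P^ℓ, e_t⟩ = ⟨σ, q_t^ℓ⟩ + Σ_{k=0}^{ℓ} ⟨σ P^k, r_t^{ℓ−k}⟩ for all distributions σ and all ℓ. Fix a pair (v,i) and define the updated vectors q̃, r̃ by the REVERSE-PUSH(v,i) operation. Then for every ℓ ≥ 0, q̃_t^ℓ + Σ_{k=0}^{ℓ} r̃_t^{ℓ−k} (P^k)^T = q_t^ℓ + Σ_{k=0}^{ℓ} r_t^{ℓ−k} (P^k)^T; in particular the invariant is preserved. -/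
open Matrix Finset

/-- A single REVERSE-PUSH(v,i) operation preserves the quantity
    q_t^ℓ + Σ_{k=0}^{ℓ} r_t^{ℓ-k}(P^k)^T, and in particular preserves the invariant. -/
theorem reverse_push_preserves_invariant {S : Type*} [Fintype S] [DecidableEq S]
    (P : Matrix S S ℝ) (hPnonneg : ∀ u v, 0 ≤ P u v) (hProw : ∀ u, ∑ v, P u v = 1)
    (t : S) (q r : ℕ → S → ℝ)
    (hinv : ∀ σ : S → ℝ, (∀ u, 0 ≤ σ u) → (∑ u, σ u = 1) → ∀ ℓ : ℕ,
      (σ ᵥ* P ^ ℓ) t =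
        (∑ u, σ u * q ℓ u) +
          ∑ k ∈ Finset.range (ℓ + 1), ∑ u, (σ ᵥ* P ^ k) u * r (ℓ - k) u)
    (v : S) (i : ℕ) :
    (∀ ℓ : ℕ,
      (fun u => (reversePush P v i (q, r)).1 ℓ u +
          ∑ k ∈ Finset.range (ℓ + 1), ((P ^ k) *ᵥ (reversePush P v i (q, r)).2 (ℓ - k)) u) =
        (fun u => q ℓ u + ∑ k ∈ Finset.range (ℓ + 1), ((P ^ k) *ᵥ r (ℓ - k)) u)) ∧
    (∀ σ : S → ℝ, (∀ u, 0 ≤ σ u) → (∑ u, σ u = 1) → ∀ ℓ : ℕ,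
      (σ ᵥ* P ^ ℓ) t =
        (∑ u, σ u * (reversePush P v i (q, r)).1 ℓ u) +
          ∑ k ∈ Finset.range (ℓ + 1),
            ∑ u, (σ ᵥ* P ^ k) u * (reversePush P v i (q, r)).2 (ℓ - k) u) := by
  classical
  set q' := (reversePush P v i (q, r)).1 with hq'
  set r' := (reversePush P v i (q, r)).2 with hr'
  have hq'def : ∀ ℓ u, q' ℓ u = q ℓ u +
      (if ℓ = i then r i v * (if u = v then 1 else 0) else 0) := by
    intro ℓ u
    simp only [hq', reversePush, Function.update_apply]
    split <;> simp_all
  have hr'def : ∀ j (u : S), r' j u = r j u +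
      (if j = i + 1 then r i v * P u v
       else if j = i then -(r i v * (if u = v then 1 else 0)) else 0) := by
    intro j u
    simp only [hr', reversePush, Function.update_apply]
    rcases eq_or_ne j (i + 1) with h1 | h1
    · subst h1
      simp [Nat.succ_ne_self]
    · rcases eq_or_ne j i with h2 | h2 <;> simp [h1, h2] <;> ring
  have hmv : ∀ (k j : ℕ) (u : S), ((P ^ k) *ᵥ r' j) u = ((P ^ k) *ᵥ r j) u +
      (if j = i + 1 then r i v * (P ^ (k + 1)) u v
       else if j = i then -(r i v * (P ^ k) u v) else 0) := by
    intro k j u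
    simp only [mulVec, dotProduct]
    rw [Finset.sum_congr rfl (fun x _ => by rw [hr'def j x, mul_add]),
      Finset.sum_add_distrib]
    congr 1
    rcases eq_or_ne j (i + 1) with h1 | h1
    · simp only [if_pos h1]
      rw [pow_succ, Matrix.mul_apply, Finset.mul_sum]
      exact Finset.sum_congr rfl fun x _ => by ring
    · rcases eq_or_ne j i with h2 | h2
      · simp only [if_neg h1, if_pos h2]
        have hx : ∀ x : S, (P ^ k) u x * (-(r i v * (if x = v then 1 else 0)))
            = if x = v then -(r i v * (P ^ k) u x) else 0 := by
          intro x
          by_cases hxv : x = v <;> simp [hxv]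
          ring
        rw [Finset.sum_congr rfl fun x _ => hx x, Finset.sum_ite_eq' Finset.univ v
          (fun x => -(r i v * (P ^ k) u x))]
        simp
      · simp [h1, h2]
  have key : ∀ ℓ : ℕ,
      (fun u => q' ℓ u + ∑ k ∈ Finset.range (ℓ + 1), ((P ^ k) *ᵥ r' (ℓ - k)) u) =
        (fun u => q ℓ u + ∑ k ∈ Finset.range (ℓ + 1), ((P ^ k) *ᵥ r (ℓ - k)) u) := by
    intro ℓ
    funext u
    have hsum : ∑ k ∈ Finset.range (ℓ + 1), ((P ^ k) *ᵥ r' (ℓ - k)) u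
        = ∑ k ∈ Finset.range (ℓ + 1), ((P ^ k) *ᵥ r (ℓ - k)) u
          + ((if i + 1 ≤ ℓ then r i v * (P ^ (ℓ - (i + 1) + 1)) u v else 0)
             + (if i ≤ ℓ then -(r i v * (P ^ (ℓ - i)) u v) else 0)) := by
      rw [← Finset.sum_range_reflect (fun k => ((P ^ k) *ᵥ r' (ℓ - k)) u) (ℓ + 1),
          ← Finset.sum_range_reflect (fun k => ((P ^ k) *ᵥ r (ℓ - k)) u) (ℓ + 1)]
      simp only [Nat.add_sub_cancel]
      have hterm : ∀ j ∈ Finset.range (ℓ + 1),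
          ((P ^ (ℓ - j)) *ᵥ r' (ℓ - (ℓ - j))) u
          = ((P ^ (ℓ - j)) *ᵥ r (ℓ - (ℓ - j))) u
            + ((if j = i + 1 then r i v * (P ^ (ℓ - j + 1)) u v else 0)
               + (if j = i then -(r i v * (P ^ (ℓ - j)) u v) else 0)) := by
        intro j hj
        rw [Nat.sub_sub_self (Nat.lt_succ_iff.mp (Finset.mem_range.mp hj)), hmv]
        congr 1
        by_cases h1 : j = i + 1 <;> by_cases h2 : j = i <;> simp [h1, h2] <;> omega
      rw [Finset.sum_congr rfl hterm, Finset.sum_add_distrib, Finset.sum_add_distrib]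
      congr 1
      congr 1
      · rw [Finset.sum_ite_eq' (Finset.range (ℓ + 1)) (i + 1)
          (fun j => r i v * (P ^ (ℓ - j + 1)) u v)]
        simp only [Finset.mem_range, Nat.lt_succ_iff]
      · rw [Finset.sum_ite_eq' (Finset.range (ℓ + 1)) i
          (fun j => -(r i v * (P ^ (ℓ - j)) u v))]
        simp [Nat.lt_succ_iff]
    rw [hq'def, hsum]
    rcases lt_trichotomy ℓ i with h | h | h
    · rw [if_neg (by omega), if_neg (by omega), if_neg (by omega)]
      ring
    · subst h
      rw [if_pos rfl, if_neg (Nat.not_succ_le_self ℓ), if_pos le_rfl, Nat.sub_self,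
        pow_zero, Matrix.one_apply]
      by_cases huv : u = v
      · simp only [if_pos huv]; ring
      · simp only [if_neg huv]; ring
    · rw [if_neg (by omega), if_pos (by omega), if_pos (by omega),
        (by omega : ℓ - (i + 1) + 1 = ℓ - i)]
      ring
  refine ⟨key, ?_⟩
  intro σ hσ0 hσ1 ℓ
  have swap : ∀ (w : S → ℝ) (k : ℕ),
      (∑ u, (σ ᵥ* P ^ k) u * w u) = ∑ u, σ u * ((P ^ k) *ᵥ w) u := by
    intro w k
    have := Matrix.dotProduct_mulVec σ (P ^ k) w
    simpa [dotProduct] using this.symm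
  have expand : ∀ (a b : ℕ → S → ℝ),
      (∑ u, σ u * a ℓ u) + ∑ k ∈ Finset.range (ℓ + 1), ∑ u, (σ ᵥ* P ^ k) u * b (ℓ - k) u
      = ∑ u, σ u * (a ℓ u + ∑ k ∈ Finset.range (ℓ + 1), ((P ^ k) *ᵥ b (ℓ - k)) u) := by
    intro a b
    rw [Finset.sum_congr rfl (fun k (_ : k ∈ Finset.range (ℓ + 1)) =>
      swap (b (ℓ - k)) k), Finset.sum_comm]
    simp only [mul_add, Finset.sum_add_distrib, Finset.mul_sum]
  rw [hinv σ hσ0 hσ1 ℓ, expand q r, expand q' r']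
  exact Finset.sum_congr rfl fun u _ => by rw [congrFun (key ℓ) u]
end

section
/- Let P be a row-stochastic matrix on finite state space S, σ a distribution on S, and suppose {q_t^k, r_t^k} satisfy the REVERSE-PUSH invariant. Let (V_0, V_1, …, V_ℓ) be the Markov chain with V_0 ∼ σ and transitions given by P. Then p_σ^ℓ[t] := ⟨σ P^ℓ, e_t⟩ = ⟨σ, q_t^ℓ⟩ + E[ Σ_{k=0}^{ℓ} r_t^{ℓ−k}(V_k) ]. In particular, the random variable ⟨σ, q_t^ℓ⟩ + Σ_{k=0}^{ℓ} r_t^{ℓ−k}(V_k) is an unbiased estimator of p_σ^ℓ[t]. -/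
open Matrix Finset

lemma sum_pi_cons {S : Type*} [Fintype S] (n : ℕ) (g : (Fin (n + 1) → S) → ℝ) :
    ∑ w : Fin (n + 1) → S, g w = ∑ u : S, ∑ w : Fin n → S, g (Fin.cons u w) := by
  calc ∑ w : Fin (n + 1) → S, g w
      = ∑ p : S × (Fin n → S), g (Fin.cons p.1 p.2) :=
        (Fintype.sum_equiv (Fin.consEquiv fun _ => S) _ _ fun p => rfl).symm
    _ = ∑ u : S, ∑ w : Fin n → S, g (Fin.cons u w) := Fintype.sum_prod_type _

lemma path_prod_cons {S : Type*} [Fintype S] (P : Matrix S S ℝ) (n : ℕ) (u : S)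
    (w : Fin (n + 1) → S) :
    (∏ i : Fin (n + 1), P ((Fin.cons u w : Fin (n + 2) → S) i.castSucc)
      ((Fin.cons u w : Fin (n + 2) → S) i.succ)) =
      P u (w 0) * ∏ i : Fin n, P (w i.castSucc) (w i.succ) := by
  rw [Fin.prod_univ_succ]; rfl

lemma path_mass {S : Type*} [Fintype S] (P : Matrix S S ℝ)
    (hProw : ∀ u, ∑ v, P u v = 1) :
    ∀ (n : ℕ) (τ : S → ℝ),
      ∑ w : Fin (n + 1) → S, τ (w 0) * ∏ i : Fin n, P (w i.castSucc) (w i.succ)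
        = ∑ u, τ u := by
  intro n
  induction n with
  | zero => intro τ; rw [sum_pi_cons]; simp
  | succ n ih =>
    intro τ
    rw [sum_pi_cons]
    refine Finset.sum_congr rfl fun u _ => ?_
    calc ∑ w : Fin (n + 1) → S, τ ((Fin.cons u w : Fin (n + 2) → S) 0) *
            ∏ i : Fin (n + 1), P ((Fin.cons u w : Fin (n + 2) → S) i.castSucc)
              ((Fin.cons u w : Fin (n + 2) → S) i.succ)
        = ∑ w : Fin (n + 1) → S, τ u * ((fun v => P u v) (w 0) *
            ∏ i : Fin n, P (w i.castSucc) (w i.succ)) := by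
          refine Finset.sum_congr rfl fun w _ => ?_
          rw [path_prod_cons]; simp
      _ = τ u * ∑ w : Fin (n + 1) → S, (fun v => P u v) (w 0) *
            ∏ i : Fin n, P (w i.castSucc) (w i.succ) := by rw [Finset.mul_sum]
      _ = τ u := by rw [ih (fun v => P u v), hProw u, mul_one]

lemma path_key {S : Type*} [Fintype S] [DecidableEq S] (P : Matrix S S ℝ)
    (hProw : ∀ u, ∑ v, P u v = 1) :
    ∀ (n : ℕ) (σ : S → ℝ) (f : Fin (n + 1) → S → ℝ),
      ∑ w : Fin (n + 1) → S,
        (σ (w 0) * ∏ i : Fin n, P (w i.castSucc) (w i.succ)) *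
          ∑ k : Fin (n + 1), f k (w k)
        = ∑ k : Fin (n + 1), ∑ u, (σ ᵥ* P ^ k.val) u * f k u := by
  intro n
  induction n with
  | zero =>
    intro σ f
    rw [sum_pi_cons]
    simp [Matrix.vecMul, dotProduct, Matrix.one_apply]
  | succ n ih =>
    intro σ f
    rw [sum_pi_cons]
    have hstep : ∀ u, ∑ w : Fin (n + 1) → S,
        (σ ((Fin.cons u w : Fin (n + 2) → S) 0) *
          ∏ i : Fin (n + 1), P ((Fin.cons u w : Fin (n + 2) → S) i.castSucc)
            ((Fin.cons u w : Fin (n + 2) → S) i.succ)) *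
          ∑ k : Fin (n + 2), f k ((Fin.cons u w : Fin (n + 2) → S) k)
      = (σ u * f 0 u) * (∑ w : Fin (n + 1) → S, (fun v => P u v) (w 0) *
            ∏ i : Fin n, P (w i.castSucc) (w i.succ))
        + ∑ w : Fin (n + 1) → S,
            (σ u * P u (w 0)) * ((∏ i : Fin n, P (w i.castSucc) (w i.succ)) *
              ∑ k : Fin (n + 1), f k.succ (w k)) := by
      intro u
      rw [Finset.mul_sum, ← Finset.sum_add_distrib]
      refine Finset.sum_congr rfl fun w _ => ?_
      rw [path_prod_cons, Fin.sum_univ_succ]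
      simp only [Fin.cons_zero, Fin.cons_succ]
      ring
    calc ∑ u, ∑ w : Fin (n + 1) → S,
          (σ ((Fin.cons u w : Fin (n + 2) → S) 0) *
            ∏ i : Fin (n + 1), P ((Fin.cons u w : Fin (n + 2) → S) i.castSucc)
              ((Fin.cons u w : Fin (n + 2) → S) i.succ)) *
            ∑ k : Fin (n + 2), f k ((Fin.cons u w : Fin (n + 2) → S) k)
        = ∑ u, ((σ u * f 0 u)
            + ∑ w : Fin (n + 1) → S,
              (σ u * P u (w 0)) * ((∏ i : Fin n, P (w i.castSucc) (w i.succ)) *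
                ∑ k : Fin (n + 1), f k.succ (w k))) := by
          refine Finset.sum_congr rfl fun u _ => ?_
          rw [hstep u, path_mass P hProw n (fun v => P u v), hProw u, mul_one]
      _ = (∑ u, σ u * f 0 u)
            + ∑ w : Fin (n + 1) → S,
              (((σ ᵥ* P) (w 0)) * ∏ i : Fin n, P (w i.castSucc) (w i.succ)) *
                ∑ k : Fin (n + 1), f k.succ (w k) := by
          rw [Finset.sum_add_distrib]
          congr 1
          rw [Finset.sum_comm]
          refine Finset.sum_congr rfl fun w _ => ?_
          simp only [Matrix.vecMul, dotProduct]
          rw [Finset.sum_mul, Finset.sum_mul]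
          apply Finset.sum_congr rfl
          intro v _
          ring
      _ = (∑ u, σ u * f 0 u)
            + ∑ k : Fin (n + 1), ∑ u, ((σ ᵥ* P) ᵥ* P ^ k.val) u * f k.succ u := by
          rw [ih (σ ᵥ* P) (fun k => f k.succ)]
      _ = ∑ k : Fin (n + 2), ∑ u, (σ ᵥ* P ^ k.val) u * f k u := by
          conv_rhs => rw [Fin.sum_univ_succ]
          congr 1
          · simp
          · apply Finset.sum_congr rfl
            intro k _
            apply Finset.sum_congr rfl
            intro u _
            rw [Matrix.vecMul_vecMul, ← pow_succ']
            rfl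

/-- If the REVERSE-PUSH invariant holds, then the random variable
    ⟨σ, q_t^ℓ⟩ + Σ_{k=0}^{ℓ} r_t^{ℓ-k}(V_k), where (V_0,…,V_ℓ) is the Markov chain
    with V_0 ∼ σ and transition matrix P, is an unbiased estimator of
    p_σ^ℓ[t] = ⟨σP^ℓ, e_t⟩.  The expectation is written as a sum over sample paths. -/
theorem unbiased_estimator {S : Type*} [Fintype S] [DecidableEq S]
    (P : Matrix S S ℝ) (hPnonneg : ∀ u v, 0 ≤ P u v) (hProw : ∀ u, ∑ v, P u v = 1)
    (t : S) (q r : ℕ → S → ℝ)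
    (hinv : ∀ σ : S → ℝ, (∀ u, 0 ≤ σ u) → (∑ u, σ u = 1) → ∀ ℓ : ℕ,
      (σ ᵥ* P ^ ℓ) t =
        (∑ u, σ u * q ℓ u) +
          ∑ k ∈ Finset.range (ℓ + 1), ∑ u, (σ ᵥ* P ^ k) u * r (ℓ - k) u)
    (σ : S → ℝ) (hσnonneg : ∀ u, 0 ≤ σ u) (hσsum : ∑ u, σ u = 1) (ℓ : ℕ) :
    (σ ᵥ* P ^ ℓ) t =
      (∑ u, σ u * q ℓ u) +
        ∑ w : Fin (ℓ + 1) → S,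
          (σ (w 0) * ∏ i : Fin ℓ, P (w i.castSucc) (w i.succ)) *
            ∑ k : Fin (ℓ + 1), r (ℓ - (k : ℕ)) (w k) := by
  rw [hinv σ hσnonneg hσsum ℓ, path_key P hProw ℓ σ (fun k u => r (ℓ - (k : ℕ)) u)]
  congr 1
  exact Finset.sum_range fun k => ∑ u, (σ ᵥ* P ^ k) u * r (ℓ - k) u
end

section
/- Let P be a row-stochastic matrix on finite state space S, σ a distribution on S, ℓ ≥ 1, and suppose {q_t^k, r_t^k} satisfy the REVERSE-PUSH invariant with all residual entries nonnegative. Let V_0, …, V_ℓ be the chain with V_0 ∼ σ, and let K be uniform on {0,1,…,ℓ} independent of the chain. Then E[ (ℓ+1) · r_t^{ℓ−K}(V_K) ] = Σ_{k=0}^{ℓ} ⟨σ P^k, r_t^{ℓ−k}⟩, so ⟨σ, q_t^ℓ⟩ + (ℓ+1)·E[r_t^{ℓ−K}(V_K)] = p_σ^ℓ[t]. -/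
open Matrix Finset

private lemma peel_lemma {S : Type*} [Fintype S] (P : Matrix S S ℝ) (σ : S → ℝ) (n : ℕ)
    (G : (Fin (n+1) → S) → S → ℝ) :
    ∑ w : Fin (n+2) → S, (σ (w 0) * ∏ i : Fin (n+1), P (w i.castSucc) (w i.succ)) *
      G (fun j => w j.castSucc) (w (Fin.last (n+1)))
    = ∑ v : Fin (n+1) → S, (σ (v 0) * ∏ i : Fin n, P (v i.castSucc) (v i.succ)) *
      ∑ x, P (v (Fin.last n)) x * G v x := by
  rw [← (Fin.snocEquiv (fun _ => S)).sum_comp]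
  rw [Fintype.sum_prod_type]
  rw [Finset.sum_comm]
  refine Finset.sum_congr rfl fun v _ => ?_
  rw [Finset.mul_sum]
  refine Finset.sum_congr rfl fun x _ => ?_
  have hsnoc : ∀ j : Fin (n+1), (Fin.snocEquiv (fun _ => S) (x, v)) j.castSucc = v j := by
    intro j; simp [Fin.snocEquiv]
  have hlast : (Fin.snocEquiv (fun _ => S) (x, v)) (Fin.last (n+1)) = x := by
    simp [Fin.snocEquiv]
  have h0 : (Fin.snocEquiv (fun _ => S) (x, v)) 0 = v 0 := by
    have := hsnoc 0; simpa using this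
  have hprod : ∏ i : Fin (n+1), P ((Fin.snocEquiv (fun _ => S) (x, v)) i.castSucc)
      ((Fin.snocEquiv (fun _ => S) (x, v)) i.succ)
      = (∏ i : Fin n, P (v i.castSucc) (v i.succ)) * P (v (Fin.last n)) x := by
    rw [Fin.prod_univ_castSucc]
    congr 1
    · refine Finset.prod_congr rfl fun i _ => ?_
      rw [hsnoc, Fin.succ_castSucc, hsnoc]
    · rw [hsnoc, Fin.succ_last, hlast]
  have hfun : (fun j => (Fin.snocEquiv (fun _ => S) (x, v)) j.castSucc) = v := by
    funext j; exact hsnoc j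
  rw [h0, hprod, hfun, hlast]
  ring_nf

private lemma path_marginal {S : Type*} [Fintype S] [DecidableEq S] (P : Matrix S S ℝ)
    (hProw : ∀ u, ∑ v, P u v = 1) (σ : S → ℝ) :
    ∀ (n : ℕ) (k : Fin (n+1)) (f : S → ℝ),
    ∑ w : Fin (n+1) → S, (σ (w 0) * ∏ i : Fin n, P (w i.castSucc) (w i.succ)) * f (w k)
    = ∑ u, (σ ᵥ* P ^ (k:ℕ)) u * f u := by
  intro n
  induction n with
  | zero =>
    intro k f
    have hk : k = 0 := Fin.fin_one_eq_zero k
    subst hk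
    rw [← (Equiv.funUnique (Fin 1) S).symm.sum_comp]
    simp [Matrix.vecMul_one]
  | succ n ih =>
    intro k f
    induction k using Fin.lastCases with
    | last =>
      have h := peel_lemma P σ n (fun _ x => f x)
      rw [h, ih (Fin.last n) (fun u => ∑ x, P u x * f x)]
      simp only [Fin.val_last]
      rw [pow_succ, ← Matrix.vecMul_vecMul]
      simp only [Matrix.vecMul, dotProduct, Finset.sum_mul, Finset.mul_sum]
      rw [Finset.sum_comm]
      exact Finset.sum_congr rfl fun a _ => Finset.sum_congr rfl fun b _ => Finset.sum_congr rfl fun _ _ => by ring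
    | cast j =>
      have h := peel_lemma P σ n (fun v _ => f (v j))
      rw [h]
      simp only [Fin.coe_castSucc]
      rw [← ih j f]
      refine Finset.sum_congr rfl fun v _ => ?_
      congr 1
      rw [← Finset.sum_mul, hProw, one_mul]

/-- With K uniform on {0,…,ℓ} independent of the chain,
    E[(ℓ+1)·r_t^{ℓ-K}(V_K)] = Σ_{k=0}^{ℓ} ⟨σP^k, r_t^{ℓ-k}⟩, and hence
    ⟨σ, q_t^ℓ⟩ + (ℓ+1)·E[r_t^{ℓ-K}(V_K)] = p_σ^ℓ[t].  Expectations are written as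
    sums over sample paths (with the uniform average over K made explicit). -/
theorem uniform_index_estimator {S : Type*} [Fintype S] [DecidableEq S]
    (P : Matrix S S ℝ) (hPnonneg : ∀ u v, 0 ≤ P u v) (hProw : ∀ u, ∑ v, P u v = 1)
    (t : S) (q r : ℕ → S → ℝ) (hrnonneg : ∀ k u, 0 ≤ r k u)
    (hinv : ∀ σ : S → ℝ, (∀ u, 0 ≤ σ u) → (∑ u, σ u = 1) → ∀ ℓ : ℕ,
      (σ ᵥ* P ^ ℓ) t =
        (∑ u, σ u * q ℓ u) +
          ∑ k ∈ Finset.range (ℓ + 1), ∑ u, (σ ᵥ* P ^ k) u * r (ℓ - k) u)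
    (σ : S → ℝ) (hσnonneg : ∀ u, 0 ≤ σ u) (hσsum : ∑ u, σ u = 1)
    (ℓ : ℕ) (hℓ : 1 ≤ ℓ) :
    (((ℓ : ℝ) + 1) *
        ∑ w : Fin (ℓ + 1) → S,
          (σ (w 0) * ∏ i : Fin ℓ, P (w i.castSucc) (w i.succ)) *
            ((1 / ((ℓ : ℝ) + 1)) * ∑ k : Fin (ℓ + 1), r (ℓ - (k : ℕ)) (w k)) =
      ∑ k ∈ Finset.range (ℓ + 1), ∑ u, (σ ᵥ* P ^ k) u * r (ℓ - k) u) ∧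
    ((∑ u, σ u * q ℓ u) +
        ((ℓ : ℝ) + 1) *
          ∑ w : Fin (ℓ + 1) → S,
            (σ (w 0) * ∏ i : Fin ℓ, P (w i.castSucc) (w i.succ)) *
              ((1 / ((ℓ : ℝ) + 1)) * ∑ k : Fin (ℓ + 1), r (ℓ - (k : ℕ)) (w k)) =
      (σ ᵥ* P ^ ℓ) t) := by
  have hc : ((ℓ : ℝ) + 1) ≠ 0 := by positivity
  have key : (((ℓ : ℝ) + 1) *
        ∑ w : Fin (ℓ + 1) → S,
          (σ (w 0) * ∏ i : Fin ℓ, P (w i.castSucc) (w i.succ)) *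
            ((1 / ((ℓ : ℝ) + 1)) * ∑ k : Fin (ℓ + 1), r (ℓ - (k : ℕ)) (w k)) =
      ∑ k ∈ Finset.range (ℓ + 1), ∑ u, (σ ᵥ* P ^ k) u * r (ℓ - k) u) := by
    have h1 : ∀ w : Fin (ℓ + 1) → S,
        (σ (w 0) * ∏ i : Fin ℓ, P (w i.castSucc) (w i.succ)) *
          ((1 / ((ℓ : ℝ) + 1)) * ∑ k : Fin (ℓ + 1), r (ℓ - (k : ℕ)) (w k))
        = (1 / ((ℓ : ℝ) + 1)) * ∑ k : Fin (ℓ + 1),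
            (σ (w 0) * ∏ i : Fin ℓ, P (w i.castSucc) (w i.succ)) * r (ℓ - (k : ℕ)) (w k) := by
      intro w
      simp only [Finset.mul_sum]
      exact Finset.sum_congr rfl fun k _ => by ring
    simp only [h1]
    rw [← Finset.mul_sum, ← mul_assoc, mul_one_div_cancel hc, one_mul]
    rw [Finset.sum_comm]
    have h2 : ∀ k : Fin (ℓ + 1),
        (∑ w : Fin (ℓ + 1) → S, (σ (w 0) * ∏ i : Fin ℓ, P (w i.castSucc) (w i.succ)) *
          r (ℓ - (k : ℕ)) (w k)) = ∑ u, (σ ᵥ* P ^ (k : ℕ)) u * r (ℓ - (k : ℕ)) u :=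
      fun k => path_marginal P hProw σ ℓ k (fun u => r (ℓ - (k : ℕ)) u)
    simp only [h2]
    exact Fin.sum_univ_eq_sum_range (fun k => ∑ u, (σ ᵥ* P ^ k) u * r (ℓ - k) u) (ℓ + 1)
  refine ⟨key, ?_⟩
  rw [key, (hinv σ hσnonneg hσsum ℓ)]
end

section
/- Let P be a row-stochastic matrix on a finite state space S with n = |S| states, let δ_r > 0, ℓ_max ≥ 0, and for v ∈ S let d^in(v) denote the in-degree of v (number of states u with P[u,v] > 0). Then (1/n) · Σ_{t∈S} Σ_{k=0}^{ℓ_max} Σ_{v∈S} (d^in(v)+1) · 1{(P^k)[v,t] ≥ δ_r} ≤ (ℓ_max + 1) · (d̄ + 1) / δ_r, where d̄ = (1/n)Σ_{v∈S} d^in(v) is the average in-degree. -/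
open Matrix Finset

private lemma pow_entry_nonneg {S : Type*} [Fintype S] [DecidableEq S]
    (P : Matrix S S ℝ) (hPnonneg : ∀ u v, 0 ≤ P u v) :
    ∀ k u v, 0 ≤ (P ^ k) u v := by
  intro k
  induction k with
  | zero => intro u v; simp [Matrix.one_apply]; split <;> norm_num
  | succ n ih =>
      intro u v
      rw [pow_succ, Matrix.mul_apply]
      exact Finset.sum_nonneg fun j _ => mul_nonneg (ih u j) (hPnonneg j v)

private lemma pow_row_sum {S : Type*} [Fintype S] [DecidableEq S]
    (P : Matrix S S ℝ) (hProw : ∀ u, ∑ v, P u v = 1) :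
    ∀ k u, ∑ v, (P ^ k) u v = 1 := by
  intro k
  induction k with
  | zero => intro u; simp [Matrix.one_apply]
  | succ n ih =>
      intro u
      simp only [pow_succ, Matrix.mul_apply]
      rw [Finset.sum_comm]
      calc ∑ j, ∑ v, (P ^ n) u j * P j v
          = ∑ j, (P ^ n) u j * ∑ v, P j v := by
            simp [Finset.mul_sum]
        _ = 1 := by simp [hProw, ih]

/-- Bound on the expected reverse-push work over a uniformly random target t:
    (1/n)·Σ_t Σ_{k=0}^{ℓmax} Σ_v (d^in(v)+1)·1{(P^k)[v,t] ≥ δ_r}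
      ≤ (ℓmax+1)·(d̄+1)/δ_r,
    where d̄ is the average in-degree. -/
theorem reverse_work_bound {S : Type*} [Fintype S] [DecidableEq S] [Nonempty S]
    (P : Matrix S S ℝ) (hPnonneg : ∀ u v, 0 ≤ P u v) (hProw : ∀ u, ∑ v, P u v = 1)
    (δr : ℝ) (hδr : 0 < δr) (ℓmax : ℕ)
    (din : S → ℕ) (hdin : ∀ v, din v = (Finset.univ.filter fun u => 0 < P u v).card)
    (dbar : ℝ) (hdbar : dbar = (1 / (Fintype.card S : ℝ)) * ∑ v, (din v : ℝ)) :
    (1 / (Fintype.card S : ℝ)) *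
        ∑ t : S, ∑ k ∈ Finset.range (ℓmax + 1), ∑ v : S,
          ((din v : ℝ) + 1) * (if δr ≤ (P ^ k) v t then (1 : ℝ) else 0) ≤
      ((ℓmax : ℝ) + 1) * (dbar + 1) / δr := by
  have hn : (0 : ℝ) < (Fintype.card S : ℝ) := by
    exact_mod_cast Fintype.card_pos
  -- key: for each v, k : ∑_t indicator ≤ 1/δr
  have key : ∀ (k : ℕ) (v : S),
      ∑ t : S, (if δr ≤ (P ^ k) v t then (1 : ℝ) else 0) ≤ 1 / δr := by
    intro k v
    have h1 : ∑ t : S, (if δr ≤ (P ^ k) v t then (1 : ℝ) else 0)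
        ≤ ∑ t : S, (P ^ k) v t / δr := by
      apply Finset.sum_le_sum
      intro t _
      split
      · next h => rw [le_div_iff₀ hδr, one_mul]; exact h
      · exact div_nonneg (pow_entry_nonneg P hPnonneg k v t) hδr.le
    calc ∑ t : S, (if δr ≤ (P ^ k) v t then (1 : ℝ) else 0)
        ≤ ∑ t : S, (P ^ k) v t / δr := h1
      _ = (∑ t : S, (P ^ k) v t) / δr := by rw [Finset.sum_div]
      _ = 1 / δr := by rw [pow_row_sum P hProw]
  -- swap the sums
  have swap : ∑ t : S, ∑ k ∈ Finset.range (ℓmax + 1), ∑ v : S,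
        ((din v : ℝ) + 1) * (if δr ≤ (P ^ k) v t then (1 : ℝ) else 0)
      = ∑ k ∈ Finset.range (ℓmax + 1), ∑ v : S,
        ((din v : ℝ) + 1) * ∑ t : S, (if δr ≤ (P ^ k) v t then (1 : ℝ) else 0) := by
    rw [Finset.sum_comm]
    refine Finset.sum_congr rfl fun k _ => ?_
    rw [Finset.sum_comm]
    refine Finset.sum_congr rfl fun v _ => ?_
    rw [Finset.mul_sum]
  have hdpos : ∀ v : S, (0 : ℝ) ≤ (din v : ℝ) + 1 := fun v => by positivity
  have bound : ∑ k ∈ Finset.range (ℓmax + 1), ∑ v : S,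
        ((din v : ℝ) + 1) * ∑ t : S, (if δr ≤ (P ^ k) v t then (1 : ℝ) else 0)
      ≤ ∑ k ∈ Finset.range (ℓmax + 1), ∑ v : S, ((din v : ℝ) + 1) * (1 / δr) := by
    refine Finset.sum_le_sum fun k _ => Finset.sum_le_sum fun v _ => ?_
    exact mul_le_mul_of_nonneg_left (key k v) (hdpos v)
  have rhs_eq : ∑ k ∈ Finset.range (ℓmax + 1), ∑ v : S, ((din v : ℝ) + 1) * (1 / δr)
      = ((ℓmax : ℝ) + 1) * ((∑ v : S, (din v : ℝ)) + Fintype.card S) * (1 / δr) := by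
    simp only [← Finset.sum_mul, Finset.sum_add_distrib, Finset.sum_const,
      Finset.card_univ, nsmul_eq_mul, mul_one, Finset.sum_const, Finset.card_range]
    push_cast
    ring
  have total : ∑ t : S, ∑ k ∈ Finset.range (ℓmax + 1), ∑ v : S,
        ((din v : ℝ) + 1) * (if δr ≤ (P ^ k) v t then (1 : ℝ) else 0)
      ≤ ((ℓmax : ℝ) + 1) * ((∑ v : S, (din v : ℝ)) + Fintype.card S) * (1 / δr) := by
    rw [swap, ← rhs_eq]; exact bound
  have final : (1 / (Fintype.card S : ℝ)) *
      (((ℓmax : ℝ) + 1) * ((∑ v : S, (din v : ℝ)) + Fintype.card S) * (1 / δr))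
      = ((ℓmax : ℝ) + 1) * (dbar + 1) / δr := by
    rw [hdbar]
    field_simp
  calc (1 / (Fintype.card S : ℝ)) *
        ∑ t : S, ∑ k ∈ Finset.range (ℓmax + 1), ∑ v : S,
          ((din v : ℝ) + 1) * (if δr ≤ (P ^ k) v t then (1 : ℝ) else 0)
      ≤ (1 / (Fintype.card S : ℝ)) *
        (((ℓmax : ℝ) + 1) * ((∑ v : S, (din v : ℝ)) + Fintype.card S) * (1 / δr)) :=
        mul_le_mul_of_nonneg_left total (by positivity)
    _ = ((ℓmax : ℝ) + 1) * (dbar + 1) / δr := final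
end

section
/- Let X_1, …, X_n be i.i.d. random variables with X_i ∈ [0, M] almost surely and mean μ = E[X_1], and let X̄ = (1/n)Σ X_i. Given δ > 0, ε ∈ (0,1), and p_f ∈ (0,1), if n ≥ max{6e/ε², 1/ln 2}·ln(2/p_f)·(M/δ), then P(|X̄ − μ| > max{ε·μ, δ}) ≤ p_f. -/
open MeasureTheory ProbabilityTheory

/-!
On `[0, M]` the function `y ↦ exp (s * y)` lies below its chord, so a variable with values in
`[0, M]` and mean `μ` has mgf at most `exp ((exp (s * M) - 1) * μ / M)`. By independence the sum
`S` of the `X i` is then mgf-dominated by `M` times a Poisson variable of mean `n μ / M`, and the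
Chernoff bound at `s = log r / M` gives its tails. If `2e μ > δ`, the deviation `max (ε μ) δ` is
at least `ε μ` and both relative tails are at most `exp (-ε² n μ / 3M)`. Otherwise the lower tail
is null, as `S ≥ 0`, and the upper one is at most `2 ^ (-n δ / M)`, since `n δ ≥ 2e n μ`. The
sample size makes each tail at most `p_f / 2`.
-/

open Real Set

lemma le_of_hasDerivAt_nonneg {f f' : ℝ → ℝ} {a b : ℝ} (hab : a ≤ b)
    (hf : ∀ y ∈ Icc a b, HasDerivAt f (f' y) y) (hf' : ∀ y ∈ Ioo a b, 0 ≤ f' y) :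
    f a ≤ f b :=
  monotoneOn_of_hasDerivWithinAt_nonneg (convex_Icc a b)
    (fun y hy ↦ (hf y hy).continuousAt.continuousWithinAt)
    (fun y hy ↦ (hf y (interior_subset hy)).hasDerivWithinAt)
    (fun y hy ↦ hf' y (by rwa [interior_Icc] at hy))
    (left_mem_Icc.2 hab) (right_mem_Icc.2 hab) hab

lemma mul_log_two_le_log_one_add {x : ℝ} (h0 : 0 ≤ x) (h1 : x ≤ 1) :
    x * log 2 ≤ log (1 + x) := by
  have h := strictConcaveOn_log_Ioi.concaveOn.2 (mem_Ioi.2 one_pos) (mem_Ioi.2 two_pos)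
    (sub_nonneg.2 h1) h0 (sub_add_cancel 1 x)
  simp only [smul_eq_mul, log_one, mul_zero, zero_add] at h
  rwa [show (1 - x) * 1 + x * 2 = 1 + x by ring] at h

lemma sq_div_three_le_one_add_mul_log_one_add_sub {x : ℝ} (h0 : 0 ≤ x) (h1 : x ≤ 1) :
    x ^ 2 / 3 ≤ (1 + x) * log (1 + x) - x := by
  have hderiv : ∀ y ∈ Icc 0 x, HasDerivAt (fun y ↦ (1 + y) * log (1 + y) - y - y ^ 2 / 3)
      (log (1 + y) - 2 * y / 3) y := by
    intro y hy
    have hy1 : 1 + y ≠ 0 := by linarith [hy.1]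
    have h1y : HasDerivAt (fun y ↦ 1 + y) 1 y := (hasDerivAt_id y).const_add 1
    exact (((h1y.mul (h1y.log hy1)).sub (hasDerivAt_id y)).sub
      ((hasDerivAt_pow 2 y).div_const 3)).congr_deriv (by field_simp; ring)
  have h := le_of_hasDerivAt_nonneg h0 hderiv fun y hy ↦ by
    have := mul_log_two_le_log_one_add hy.1.le (hy.2.le.trans h1)
    nlinarith [log_two_gt_d9, hy.1]
  simp only [add_zero, log_one, mul_zero, sub_zero, ne_eq, OfNat.ofNat_ne_zero,
    not_false_eq_true, zero_pow, zero_div] at h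
  linarith

lemma sq_div_three_le_add_one_sub_mul_log_one_sub {x : ℝ} (h0 : 0 ≤ x) (h1 : x < 1) :
    x ^ 2 / 3 ≤ x + (1 - x) * log (1 - x) := by
  have hderiv : ∀ y ∈ Icc 0 x, HasDerivAt (fun y ↦ y + (1 - y) * log (1 - y) - y ^ 2 / 3)
      (-log (1 - y) - 2 * y / 3) y := by
    intro y hy
    have hy1 : 1 - y ≠ 0 := by linarith [hy.2]
    have h1y : HasDerivAt (fun y ↦ 1 - y) (-1) y := (hasDerivAt_id y).const_sub 1
    exact (((hasDerivAt_id y).add (h1y.mul (h1y.log hy1))).sub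
      ((hasDerivAt_pow 2 y).div_const 3)).congr_deriv (by field_simp; ring)
  have h := le_of_hasDerivAt_nonneg h0 hderiv fun y hy ↦ by
    have := log_le_sub_one_of_pos (show 0 < 1 - y by linarith [hy.2])
    linarith [hy.1]
  simp only [add_zero, log_one, mul_zero, sub_zero, ne_eq, OfNat.ofNat_ne_zero,
    not_false_eq_true, zero_pow, zero_div] at h
  linarith

lemma exp_mul_le_of_mem_Icc {s y M : ℝ} (hM : 0 < M) (hy : y ∈ Icc 0 M) :
    exp (s * y) ≤ 1 + (exp (s * M) - 1) * y / M := by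
  have h := convexOn_exp.2 (mem_univ 0) (mem_univ (s * M))
    (sub_nonneg.2 ((div_le_one hM).2 hy.2)) (div_nonneg hy.1 hM.le) (sub_add_cancel 1 (y / M))
  simp only [smul_eq_mul, mul_zero, zero_add, exp_zero, mul_one] at h
  rw [show y / M * (s * M) = s * y by field_simp] at h
  exact h.trans_eq (by ring)

section

variable {Ω : Type*} [MeasurableSpace Ω] {P : Measure Ω}

/-- The mgf of `S` is at most that of `M` times a Poisson variable of mean `ν / M`. -/
def PoissonMgfBounded (S : Ω → ℝ) (P : Measure Ω) (M ν : ℝ) : Prop :=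
  ∀ s, Integrable (fun ω ↦ exp (s * S ω)) P ∧ mgf S P s ≤ exp ((exp (s * M) - 1) * ν / M)

lemma poissonMgfBounded_of_mem_Icc [IsProbabilityMeasure P] {Y : Ω → ℝ} {M : ℝ}
    (hY : AEMeasurable Y P) (hM : 0 < M) (hb : ∀ᵐ ω ∂P, Y ω ∈ Icc 0 M) :
    PoissonMgfBounded Y P M P[Y] := by
  intro s
  have hint : Integrable Y P := .of_mem_Icc 0 M hY hb
  refine ⟨integrable_exp_mul_of_mem_Icc hY hb, ?_⟩
  calc mgf Y P s ≤ P[fun ω ↦ 1 + (exp (s * M) - 1) * Y ω / M] :=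
        integral_mono_ae (integrable_exp_mul_of_mem_Icc hY hb)
          ((integrable_const 1).add ((hint.const_mul _).div_const M))
          (hb.mono fun ω ↦ exp_mul_le_of_mem_Icc hM)
    _ = 1 + (exp (s * M) - 1) * P[Y] / M := by
        rw [integral_add (integrable_const 1) ((hint.const_mul _).div_const M), integral_div,
          integral_const_mul, integral_const, probReal_univ, one_smul]
    _ ≤ exp ((exp (s * M) - 1) * P[Y] / M) := by
        linarith [add_one_le_exp ((exp (s * M) - 1) * P[Y] / M)]

namespace PoissonMgfBounded

variable {S : Ω → ℝ} {M ν : ℝ}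

lemma sum {ι : Type*} {X : ι → Ω → ℝ} {m : ι → ℝ} (hmeas : ∀ i, Measurable (X i))
    (hindep : iIndepFun X P) (s : Finset ι) (hX : ∀ i ∈ s, PoissonMgfBounded (X i) P M (m i)) :
    PoissonMgfBounded (∑ i ∈ s, X i) P M (∑ i ∈ s, m i) := fun t ↦ by
  have := hindep.isProbabilityMeasure
  refine ⟨hindep.integrable_exp_mul_sum hmeas fun i hi ↦ (hX i hi t).1, ?_⟩
  rw [hindep.mgf_sum hmeas, Finset.mul_sum, Finset.sum_div, exp_sum]
  exact Finset.prod_le_prod (fun i _ ↦ mgf_nonneg) fun i hi ↦ (hX i hi t).2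

lemma sum_of_mem_Icc {ι : Type*} [Fintype ι] {X : ι → Ω → ℝ} {μ : ℝ}
    (hmeas : ∀ i, Measurable (X i)) (hindep : iIndepFun X P) (hM : 0 < M)
    (hbdd : ∀ i, ∀ᵐ ω ∂P, X i ω ∈ Icc 0 M) (hmean : ∀ i, P[X i] = μ) :
    PoissonMgfBounded (∑ i, X i) P M (Fintype.card ι * μ) := by
  have := hindep.isProbabilityMeasure
  simpa [hmean] using sum hmeas hindep Finset.univ
    fun i _ ↦ poissonMgfBounded_of_mem_Icc (hmeas i).aemeasurable hM (hbdd i)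

lemma exp_neg_mul_mgf_le (hS : PoissonMgfBounded S P M ν) (hM : 0 < M) {r : ℝ} (hr : 0 < r)
    (a : ℝ) :
    exp (-(log r / M) * a) * mgf S P (log r / M) ≤ exp ((ν * (r - 1) - a * log r) / M) := by
  calc exp (-(log r / M) * a) * mgf S P (log r / M)
      ≤ exp (-(log r / M) * a) * exp ((exp (log r / M * M) - 1) * ν / M) := by
        gcongr; exact (hS _).2
    _ = exp ((ν * (r - 1) - a * log r) / M) := by
        rw [div_mul_cancel₀ _ hM.ne', exp_log hr, ← exp_add]
        ring_nf

variable [IsFiniteMeasure P]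

lemma measureReal_ge_le (hS : PoissonMgfBounded S P M ν) (hM : 0 < M) {r : ℝ} (hr : 1 ≤ r)
    (a : ℝ) : P.real {ω | a ≤ S ω} ≤ exp ((ν * (r - 1) - a * log r) / M) :=
  (measure_ge_le_exp_mul_mgf a (div_nonneg (log_nonneg hr) hM.le) (hS _).1).trans
    (hS.exp_neg_mul_mgf_le hM (by linarith) a)

lemma measureReal_le_le (hS : PoissonMgfBounded S P M ν) (hM : 0 < M) {r : ℝ} (hr0 : 0 < r)
    (hr1 : r ≤ 1) (b : ℝ) : P.real {ω | S ω ≤ b} ≤ exp ((ν * (r - 1) - b * log r) / M) :=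
  (measure_le_le_exp_mul_mgf b (div_nonpos_of_nonpos_of_nonneg (log_nonpos hr0.le hr1) hM.le)
    (hS _).1).trans (hS.exp_neg_mul_mgf_le hM hr0 b)

lemma measureReal_one_add_mul_le (hS : PoissonMgfBounded S P M ν) (hM : 0 < M) (hν : 0 ≤ ν)
    {ε : ℝ} (hε0 : 0 ≤ ε) (hε1 : ε ≤ 1) :
    P.real {ω | (1 + ε) * ν ≤ S ω} ≤ exp (-(ε ^ 2 * ν / (3 * M))) := by
  refine (hS.measureReal_ge_le hM (r := 1 + ε) (by linarith) _).trans (exp_le_exp.2 ?_)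
  have := mul_le_mul_of_nonneg_left (sq_div_three_le_one_add_mul_log_one_add_sub hε0 hε1) hν
  rw [neg_div', ← div_div, div_le_div_iff_of_pos_right hM]
  linarith

lemma measureReal_le_one_sub_mul (hS : PoissonMgfBounded S P M ν) (hM : 0 < M) (hν : 0 ≤ ν)
    {ε : ℝ} (hε0 : 0 ≤ ε) (hε1 : ε < 1) :
    P.real {ω | S ω ≤ (1 - ε) * ν} ≤ exp (-(ε ^ 2 * ν / (3 * M))) := by
  refine (hS.measureReal_le_le hM (r := 1 - ε) (by linarith) (by linarith) _).trans
    (exp_le_exp.2 ?_)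
  have := mul_le_mul_of_nonneg_left (sq_div_three_le_add_one_sub_mul_log_one_sub hε0 hε1) hν
  rw [neg_div', ← div_div, div_le_div_iff_of_pos_right hM]
  linarith

lemma measureReal_ge_le_exp_neg_mul_log_two (hS : PoissonMgfBounded S P M ν) (hM : 0 < M)
    (hν : 0 ≤ ν) {b : ℝ} (hb : 2 * exp 1 * ν ≤ b) :
    P.real {ω | b ≤ S ω} ≤ exp (-(b * log 2 / M)) := by
  refine (hS.measureReal_ge_le hM (r := 2 * exp 1) (by linarith [add_one_le_exp 1]) _).trans
    (exp_le_exp.2 ?_)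
  rw [neg_div', div_le_div_iff_of_pos_right hM, log_mul two_ne_zero (exp_pos 1).ne', log_exp]
  linarith

lemma measureReal_tails_le (hS : PoissonMgfBounded S P M ν) (hS0 : ∀ᵐ ω ∂P, 0 ≤ S ω)
    (hM : 0 < M) (hν : 0 ≤ ν) {ε δ t L : ℝ} (hε0 : 0 < ε) (hε1 : ε < 1) (hδ : 0 < δ)
    (hL : 0 ≤ L) (hsize : max (6 * exp 1 / ε ^ 2) (1 / log 2) * (L * M) ≤ δ)
    (hεt : ε * ν ≤ t) (hδt : δ ≤ t) :
    P.real {ω | ν + t ≤ S ω} + P.real {ω | S ω ≤ ν - t} ≤ 2 * exp (-L) := by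
  have hLM : 0 ≤ L * M := mul_nonneg hL hM.le
  rcases le_or_gt (2 * exp 1 * ν) δ with hsmall | hlarge
  · have hLδ : L ≤ δ * log 2 / M := by
      have := (mul_le_mul_of_nonneg_right (le_max_right _ _) hLM).trans hsize
      rwa [one_div_mul_eq_div, div_le_iff₀ (log_pos one_lt_two), ← le_div_iff₀ hM] at this
    have hupper : P.real {ω | ν + t ≤ S ω} ≤ exp (-L) := calc
      _ ≤ P.real {ω | δ ≤ S ω} := measureReal_mono <| ofPred_subset_ofPred.2 fun ω h ↦ by linarith
      _ ≤ exp (-(δ * log 2 / M)) := hS.measureReal_ge_le_exp_neg_mul_log_two hM hν hsmall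
      _ ≤ exp (-L) := exp_le_exp.2 (neg_le_neg hLδ)
    have hlower : P.real {ω | S ω ≤ ν - t} = 0 := by
      have hνδ : ν < δ := by nlinarith [add_one_le_exp 1]
      have hsub : {ω | S ω ≤ ν - t} ⊆ {ω | ¬0 ≤ S ω} :=
        ofPred_subset_ofPred.2 fun ω h h0 ↦ by linarith
      rw [measureReal_def, measure_mono_null hsub (ae_iff.1 hS0), ENNReal.toReal_zero]
    linarith [exp_pos (-L)]
  · have hLν : L ≤ ε ^ 2 * ν / (3 * M) := by
      have := (mul_le_mul_of_nonneg_right (le_max_left _ _) hLM).trans hsize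
      rw [div_mul_eq_mul_div, div_le_iff₀ (by positivity)] at this
      rw [le_div_iff₀ (by positivity)]
      nlinarith [exp_pos 1, mul_le_mul_of_nonneg_left hlarge.le (sq_nonneg ε)]
    have hexp : exp (-(ε ^ 2 * ν / (3 * M))) ≤ exp (-L) := exp_le_exp.2 (neg_le_neg hLν)
    have hupper : P.real {ω | ν + t ≤ S ω} ≤ exp (-(ε ^ 2 * ν / (3 * M))) := calc
      _ ≤ P.real {ω | (1 + ε) * ν ≤ S ω} :=
        measureReal_mono <| ofPred_subset_ofPred.2 fun ω h ↦ by linarith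
      _ ≤ _ := hS.measureReal_one_add_mul_le hM hν hε0.le hε1.le
    have hlower : P.real {ω | S ω ≤ ν - t} ≤ exp (-(ε ^ 2 * ν / (3 * M))) := calc
      _ ≤ P.real {ω | S ω ≤ (1 - ε) * ν} :=
        measureReal_mono <| ofPred_subset_ofPred.2 fun ω h ↦ by linarith
      _ ≤ _ := hS.measureReal_le_one_sub_mul hM hν hε0.le hε1
    linarith

end PoissonMgfBounded

end

lemma le_or_le_of_lt_abs_one_div_mul_sub {n s μ t : ℝ} (hn : 0 < n) (h : t < |1 / n * s - μ|) :
    n * μ + n * t ≤ s ∨ s ≤ n * μ - n * t := by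
  rw [one_div, inv_mul_eq_div] at h
  rcases lt_abs.1 h with h | h
  · left
    rw [lt_sub_iff_add_lt, lt_div_iff₀ hn] at h
    linarith
  · right
    have : s / n < μ - t := by linarith
    rw [div_lt_iff₀ hn] at this
    linarith

/-- Accuracy of the Monte Carlo stage (single-length version): for i.i.d. X_i ∈ [0,M]
    with mean μ and sample mean X̄, if n ≥ max{6e/ε², 1/ln 2}·ln(2/p_f)·(M/δ) then
    P(|X̄ − μ| > max{ε·μ, δ}) ≤ p_f. -/
theorem monte_carlo_accuracy {Ω : Type*} [MeasureSpace Ω]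
    [IsProbabilityMeasure (ℙ : Measure Ω)] (n : ℕ) (hn : 0 < n) (X : Fin n → Ω → ℝ)
    (hmeas : ∀ i, Measurable (X i))
    (hindep : iIndepFun X ℙ)
    (hident : ∀ i j, IdentDistrib (X i) (X j) ℙ ℙ)
    (M : ℝ) (hM : 0 < M)
    (hbdd : ∀ i, ∀ᵐ ω ∂ℙ, X i ω ∈ Set.Icc (0 : ℝ) M)
    (μ : ℝ) (hμ : μ = ∫ ω, X ⟨0, hn⟩ ω ∂ℙ)
    (δ ε pf : ℝ) (hδ : 0 < δ) (hε : ε ∈ Set.Ioo (0 : ℝ) 1) (hpf : pf ∈ Set.Ioo (0 : ℝ) 1)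
    (hnlarge : max (6 * Real.exp 1 / ε ^ 2) (1 / Real.log 2) *
        Real.log (2 / pf) * (M / δ) ≤ (n : ℝ)) :
    (ℙ {ω | max (ε * μ) δ < |(1 / (n : ℝ)) * (∑ i, X i ω) - μ|}).toReal ≤ pf := by
  obtain ⟨hε0, hε1⟩ := hε
  obtain ⟨hpf0, hpf1⟩ := hpf
  have hnpos : (0 : ℝ) < n := Nat.cast_pos.2 hn
  have hmean : ∀ i, ∫ ω, X i ω = μ := fun i ↦ hμ ▸ (hident i ⟨0, hn⟩).integral_eq
  have hμ0 : 0 ≤ μ := hμ ▸ integral_nonneg_of_ae ((hbdd _).mono fun ω h ↦ h.1)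
  have hS := PoissonMgfBounded.sum_of_mem_Icc hmeas hindep hM hbdd hmean
  rw [Fintype.card_fin] at hS
  have hS0 : ∀ᵐ ω, 0 ≤ (∑ i, X i) ω := by
    filter_upwards [ae_all_iff.2 hbdd] with ω hω
    simpa using Finset.sum_nonneg fun i _ ↦ (hω i).1
  rw [mul_assoc, mul_div_assoc', ← mul_div_assoc, div_le_iff₀ hδ] at hnlarge
  have hεt : ε * (n * μ) ≤ n * max (ε * μ) δ := by
    rw [mul_left_comm]; exact mul_le_mul_of_nonneg_left (le_max_left _ _) hnpos.le
  have hδt : n * δ ≤ n * max (ε * μ) δ := mul_le_mul_of_nonneg_left (le_max_right _ _) hnpos.le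
  have htails := hS.measureReal_tails_le hS0 hM (by positivity) hε0 hε1 (mul_pos hnpos hδ)
    (log_nonneg (by rw [le_div_iff₀ hpf0]; linarith)) hnlarge hεt hδt
  simp only [Finset.sum_apply] at htails
  calc _ ≤ (ℙ : Measure Ω).real ({ω | n * μ + n * max (ε * μ) δ ≤ ∑ i, X i ω} ∪
          {ω | ∑ i, X i ω ≤ n * μ - n * max (ε * μ) δ}) :=
        measureReal_mono fun ω h ↦ le_or_le_of_lt_abs_one_div_mul_sub hnpos h
    _ ≤ 2 * exp (-log (2 / pf)) := (measureReal_union_le _ _).trans htails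
    _ = pf := by rw [exp_neg, exp_log (by positivity), inv_div]; ring
end
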